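/- arXiv:2508.02665 — 4 statements merged into one kernel-verified Lean document; each statement's English description precedes it below -/
import Mathlib

section
/- Validity of the reinforced aggregated demand constraints under single allocation: let (H, E', a, {P^r}) be a feasible SA-GHLP solution, let f = Σ_{r∈R} f^r be its induced flow (each f^r places flow w^r on every arc of P^r), and set x¹_{ik} = 1 if i ∉ H and k = a(i), and x¹_{ik} = 0 otherwise. Then for every S ⊆ V: f(δ⁺(S)) ≥ W(S:S^c) + Σ_{i,j∈S, i≠j} w_{ij} Σ_{k∉S} x¹_{ik} + Σ_{i,j∉S, i≠j} w_{ij} Σ_{k∈S} x¹_{ik}. -/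
open scoped Classical
open Finset

/-- A consistent r-path, given by its list `ks` of intermediate hubs, for a
commodity with origin `a` and destination `b`, in the design solution with hub
set `H` and interhub edge set `E'` (encoded as a set of ordered pairs of
distinct hubs, closed under swapping). -/
def IsRPath {n : ℕ} (H : Finset (Fin n)) (E' : Finset (Fin n × Fin n))
    (a b : Fin n) (ks : List (Fin n)) : Prop :=
  ks ≠ [] ∧ ks.Nodup ∧ (∀ k ∈ ks, k ∈ H) ∧
    ks.Chain' (fun x y => (x, y) ∈ E') ∧
    (a ∈ H → ks.head? = some a) ∧ (b ∈ H → ks.getLast? = some b)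

/-- The full node sequence of the r-path with hub list `ks`, from origin `a` to
destination `b`: the access leg is prepended when it is nonempty and the
distribution leg is appended when it is nonempty. -/
def fullSeq {n : ℕ} (a b : Fin n) (ks : List (Fin n)) : List (Fin n) :=
  (if ks.headD a = a then ks else a :: ks) ++ (if ks.getLastD b = b then [] else [b])

/-- The flow induced by the family of r-paths `P` on arc `(i, j)`: the sum of
the demands of the commodities whose (full) r-path traverses `(i, j)`. -/
def pathFlow {n : ℕ} {R : Type} [Fintype R] (o d : R → Fin n) (w : R → ℝ)
    (P : R → List (Fin n)) (i j : Fin n) : ℝ :=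
  ∑ r, if (i, j) ∈ (fullSeq (o r) (d r) (P r)).zip (fullSeq (o r) (d r) (P r)).tail
    then w r else 0

/-- `w_{ij}`: the demand of the commodity from `i` to `j` (`0` if there is none). -/
def W2dem {n : ℕ} {R : Type} [Fintype R] (o d : R → Fin n) (w : R → ℝ)
    (i j : Fin n) : ℝ :=
  ∑ r, if o r = i ∧ d r = j then w r else 0

/-- The single-allocation variables `x¹_{ik}`: `1` if `i` is a non-hub node
allocated to hub `k = al i`, and `0` otherwise. -/
def x1SA {n : ℕ} (H : Finset (Fin n)) (al : Fin n → Fin n) (i k : Fin n) : ℝ :=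
  if i ∉ H ∧ al i = k then 1 else 0


lemma getLast?_of_getLastD {α : Type*} {L : List α} {b : α} (hL : L ≠ [])
    (h : L.getLastD b = b) : L.getLast? = some b := by
  rw [List.getLastD_eq_getLast?] at h
  cases hy : L.getLast? with
  | none => exact absurd (List.getLast?_eq_none_iff.mp hy) hL
  | some y => rw [hy] at h; simp at h; rw [h]

lemma head?_of_headD {α : Type*} {L : List α} {a : α} (hL : L ≠ [])
    (h : L.headD a = a) : L.head? = some a := by
  cases L with
  | nil => exact absurd rfl hL
  | cons x t => simpa using h

lemma head?_fullSeq {n : ℕ} (a b : Fin n) (ks : List (Fin n)) (hks : ks ≠ []) :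
    (fullSeq a b ks).head? = some a := by
  unfold fullSeq
  by_cases h : ks.headD a = a
  · rw [if_pos h, List.head?_append_of_ne_nil _ hks]
    exact head?_of_headD hks h
  · rw [if_neg h]; simp

lemma getLast?_fullSeq {n : ℕ} (a b : Fin n) (ks : List (Fin n)) (hks : ks ≠ []) :
    (fullSeq a b ks).getLast? = some b := by
  unfold fullSeq
  by_cases h : ks.getLastD b = b
  · rw [if_pos h, List.append_nil]
    by_cases h2 : ks.headD a = a
    · rw [if_pos h2]; exact getLast?_of_getLastD hks h
    · rw [if_neg h2]
      rw [show a :: ks = [a] ++ ks from rfl, List.getLast?_append_of_ne_nil _ hks]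
      exact getLast?_of_getLastD hks h
  · rw [if_neg h]
    by_cases h2 : ks.headD a = a <;> simp [h, h2]

lemma exists_cross {α : Type*} (S : Finset α) :
    ∀ (L : List α) (a b : α), a ∈ S → b ∉ S → L.head? = some a →
      L.getLast? = some b → ∃ p ∈ L.zip L.tail, p.1 ∈ S ∧ p.2 ∉ S := by
  intro L
  induction L with
  | nil => intro a b _ _ h; simp at h
  | cons x t ih =>
    intro a b ha hb hh hl
    simp only [List.head?_cons, Option.some.injEq] at hh
    subst hh
    cases t with
    | nil =>
      simp only [List.getLast?_singleton, Option.some.injEq] at hl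
      subst hl; exact absurd ha hb
    | cons y t' =>
      by_cases hy : y ∈ S
      · obtain ⟨p, hp, h1, h2⟩ := ih y b hy hb rfl (by simpa using hl)
        exact ⟨p, by simpa using Or.inr hp, h1, h2⟩
      · exact ⟨(x, y), by simp, ha, hy⟩

lemma cross_main {n : ℕ} (S H : Finset (Fin n)) (a b : Fin n) (al : Fin n → Fin n)
    (ks : List (Fin n)) (hks : ks ≠ []) (hhd : a ∉ H → ks.headD a = al a)
    (halH : a ∉ H → al a ∈ H)
    (hC : (a ∈ S ∧ b ∉ S) ∨ (a ∈ S ∧ b ∈ S ∧ a ∉ H ∧ al a ∉ S) ∨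
      (a ∉ S ∧ b ∉ S ∧ a ∉ H ∧ al a ∈ S)) :
    ∃ p ∈ (fullSeq a b ks).zip (fullSeq a b ks).tail, p.1 ∈ S ∧ p.2 ∉ S := by
  rcases hC with ⟨ha, hb⟩ | ⟨ha, hb, haH, hal⟩ | ⟨ha, hb, haH, hal⟩
  · exact exists_cross S _ a b ha hb (head?_fullSeq a b ks hks) (getLast?_fullSeq a b ks hks)
  all_goals
    have hne : ks.headD a ≠ a := by
      rw [hhd haH]; intro h; exact haH (h ▸ halH haH)
  all_goals
    have hfs : fullSeq a b ks = a :: (ks ++ if ks.getLastD b = b then [] else [b]) := by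
      unfold fullSeq; rw [if_neg hne]; rfl
  all_goals obtain ⟨k0, ks', rfl⟩ := List.exists_cons_of_ne_nil hks
  all_goals have hk0 : k0 = al a := by simpa using hhd haH
  · -- case 2: crossing (a, al a)
    refine ⟨(a, k0), ?_, ha, hk0 ▸ hal⟩
    rw [hfs]; simp
  · -- case 3
    have hM : ((k0 :: ks') ++ if (k0 :: ks').getLastD b = b then [] else [b]).head? = some (al a) := by
      rw [List.head?_append_of_ne_nil _ (by simp)]; simp [hk0]
    have hMl : ((k0 :: ks') ++ if (k0 :: ks').getLastD b = b then [] else [b]).getLast? = some b := by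
      have := getLast?_fullSeq a b (k0 :: ks') (by simp)
      rw [hfs] at this
      rw [show a :: (k0 :: ks' ++ if (k0 :: ks').getLastD b = b then [] else [b]) =
          [a] ++ (k0 :: ks' ++ if (k0 :: ks').getLastD b = b then [] else [b]) from rfl] at this
      rwa [List.getLast?_append_of_ne_nil _ (by simp)] at this
    obtain ⟨p, hp, h1, h2⟩ := exists_cross S _ (al a) b hal hb hM hMl
    refine ⟨p, ?_, h1, h2⟩
    rw [hfs]
    cases hM2 : ((k0 :: ks') ++ if (k0 :: ks').getLastD b = b then [] else [b]) with
    | nil => rw [hM2] at hp; simp at hp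
    | cons m0 M' => rw [hM2] at hp; simp; right; exact hp

/-- Validity of the reinforced aggregated demand constraints under single
allocation: for a feasible SA-GHLP solution with hub set `H`, interhub edges
`E'`, allocation `al` and consistent r-paths `P`, the induced flow on any
di-cut `δ⁺(S)` is at least
`W(S:Sᶜ) + Σ_{i,j∈S, i≠j} w_{ij} Σ_{k∉S} x¹_{ik} + Σ_{i,j∉S, i≠j} w_{ij} Σ_{k∈S} x¹_{ik}`. -/
theorem statement3 {n : ℕ} (hn : 2 ≤ n) {R : Type} [Fintype R]
    (o d : R → Fin n) (hod : ∀ r, o r ≠ d r)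
    (w : R → ℝ) (hw : ∀ r, 0 ≤ w r)
    (hinj : Function.Injective fun r => (o r, d r))
    (H : Finset (Fin n)) (hH : H.Nonempty)
    (E' : Finset (Fin n × Fin n))
    (hE' : ∀ p ∈ E', p.1 ≠ p.2 ∧ p.1 ∈ H ∧ p.2 ∈ H ∧ (p.2, p.1) ∈ E')
    (al : Fin n → Fin n) (hal : ∀ i, i ∉ H → al i ∈ H)
    (P : R → List (Fin n)) (hP : ∀ r, IsRPath H E' (o r) (d r) (P r))
    (hSA1 : ∀ r, o r ∉ H → (P r).headD (o r) = al (o r))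
    (hSA2 : ∀ r, d r ∉ H → (P r).getLastD (d r) = al (d r))
    (S : Finset (Fin n)) :
    (∑ r ∈ univ.filter (fun r => o r ∈ S ∧ d r ∉ S), w r) +
        (∑ p ∈ univ.filter (fun p : Fin n × Fin n =>
            p.1 ∈ S ∧ p.2 ∈ S ∧ p.1 ≠ p.2),
          W2dem o d w p.1 p.2 * ∑ k ∈ univ.filter (fun k => k ∉ S), x1SA H al p.1 k) +
        (∑ p ∈ univ.filter (fun p : Fin n × Fin n =>
            p.1 ∉ S ∧ p.2 ∉ S ∧ p.1 ≠ p.2),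
          W2dem o d w p.1 p.2 * ∑ k ∈ S, x1SA H al p.1 k) ≤
      ∑ p ∈ univ.filter (fun p : Fin n × Fin n => p.1 ∈ S ∧ p.2 ∉ S),
        pathFlow o d w P p.1 p.2 := by
  classical
  have hx1out : ∀ i : Fin n, (∑ k ∈ univ.filter (fun k => k ∉ S), x1SA H al i k)
      = if i ∉ H ∧ al i ∉ S then (1:ℝ) else 0 := by
    intro i
    unfold x1SA
    by_cases hi : i ∈ H
    · simp [hi]
    · simp only [hi, not_false_eq_true, true_and]
      rw [Finset.sum_ite_eq]
      simp
  have hx1in : ∀ i : Fin n, (∑ k ∈ S, x1SA H al i k)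
      = if i ∉ H ∧ al i ∈ S then (1:ℝ) else 0 := by
    intro i
    unfold x1SA
    by_cases hi : i ∈ H
    · simp [hi]
    · simp only [hi, not_false_eq_true, true_and]
      rw [Finset.sum_ite_eq]
  have hsum1 : (∑ r ∈ univ.filter (fun r => o r ∈ S ∧ d r ∉ S), w r)
      = ∑ r : R, if o r ∈ S ∧ d r ∉ S then w r else 0 := by
    rw [Finset.sum_filter]
  have hsum2 : (∑ p ∈ univ.filter (fun p : Fin n × Fin n =>
        p.1 ∈ S ∧ p.2 ∈ S ∧ p.1 ≠ p.2),
        W2dem o d w p.1 p.2 * ∑ k ∈ univ.filter (fun k => k ∉ S), x1SA H al p.1 k)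
      = ∑ r : R, if o r ∈ S ∧ d r ∈ S ∧ o r ∉ H ∧ al (o r) ∉ S then w r else 0 := by
    have e1 : ∀ p : Fin n × Fin n,
        W2dem o d w p.1 p.2 * (∑ k ∈ univ.filter (fun k => k ∉ S), x1SA H al p.1 k)
        = ∑ r : R, if (o r = p.1 ∧ d r = p.2) ∧ (p.1 ∉ H ∧ al p.1 ∉ S) then w r else 0 := by
      intro p
      rw [hx1out p.1]
      unfold W2dem
      rw [Finset.sum_mul]
      refine Finset.sum_congr rfl fun r _ => ?_
      by_cases hA : (o r = p.1 ∧ d r = p.2) <;>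
        by_cases hB : (p.1 ∉ H ∧ al p.1 ∉ S) <;> simp [hA, hB]
    rw [Finset.sum_congr rfl fun p _ => e1 p, Finset.sum_comm]
    refine Finset.sum_congr rfl fun r _ => ?_
    rw [Finset.sum_filter]
    have e2 : ∀ p : Fin n × Fin n,
        (if p.1 ∈ S ∧ p.2 ∈ S ∧ p.1 ≠ p.2 then
          (if (o r = p.1 ∧ d r = p.2) ∧ (p.1 ∉ H ∧ al p.1 ∉ S) then w r else 0) else 0)
        = if p = (o r, d r) then
            (if o r ∈ S ∧ d r ∈ S ∧ o r ∉ H ∧ al (o r) ∉ S then w r else 0) else 0 := by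
      intro p
      by_cases hp : p = (o r, d r)
      · subst hp
        by_cases hA : o r ∈ S <;> by_cases hB : d r ∈ S <;>
          by_cases hC2 : o r ∉ H ∧ al (o r) ∉ S <;>
          simp [hA, hB, hC2, hod r]
      · rw [if_neg hp]
        by_cases hq : p.1 ∈ S ∧ p.2 ∈ S ∧ p.1 ≠ p.2
        · rw [if_pos hq, if_neg]
          rintro ⟨⟨h1, h2⟩, -⟩
          exact hp (by cases p; simp_all)
        · rw [if_neg hq]
    rw [Finset.sum_congr rfl fun p _ => e2 p, Finset.sum_ite_eq' univ (o r, d r)]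
    simp
  have hsum3 : (∑ p ∈ univ.filter (fun p : Fin n × Fin n =>
        p.1 ∉ S ∧ p.2 ∉ S ∧ p.1 ≠ p.2),
        W2dem o d w p.1 p.2 * ∑ k ∈ S, x1SA H al p.1 k)
      = ∑ r : R, if o r ∉ S ∧ d r ∉ S ∧ o r ∉ H ∧ al (o r) ∈ S then w r else 0 := by
    have e1 : ∀ p : Fin n × Fin n,
        W2dem o d w p.1 p.2 * (∑ k ∈ S, x1SA H al p.1 k)
        = ∑ r : R, if (o r = p.1 ∧ d r = p.2) ∧ (p.1 ∉ H ∧ al p.1 ∈ S) then w r else 0 := by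
      intro p
      rw [hx1in p.1]
      unfold W2dem
      rw [Finset.sum_mul]
      refine Finset.sum_congr rfl fun r _ => ?_
      by_cases hA : (o r = p.1 ∧ d r = p.2) <;>
        by_cases hB : (p.1 ∉ H ∧ al p.1 ∈ S) <;> simp [hA, hB]
    rw [Finset.sum_congr rfl fun p _ => e1 p, Finset.sum_comm]
    refine Finset.sum_congr rfl fun r _ => ?_
    rw [Finset.sum_filter]
    have e2 : ∀ p : Fin n × Fin n,
        (if p.1 ∉ S ∧ p.2 ∉ S ∧ p.1 ≠ p.2 then
          (if (o r = p.1 ∧ d r = p.2) ∧ (p.1 ∉ H ∧ al p.1 ∈ S) then w r else 0) else 0)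
        = if p = (o r, d r) then
            (if o r ∉ S ∧ d r ∉ S ∧ o r ∉ H ∧ al (o r) ∈ S then w r else 0) else 0 := by
      intro p
      by_cases hp : p = (o r, d r)
      · subst hp
        by_cases hA : o r ∈ S <;> by_cases hB : d r ∈ S <;>
          by_cases hC2 : o r ∉ H ∧ al (o r) ∈ S <;>
          simp [hA, hB, hC2, hod r]
      · rw [if_neg hp]
        by_cases hq : p.1 ∉ S ∧ p.2 ∉ S ∧ p.1 ≠ p.2
        · rw [if_pos hq, if_neg]
          rintro ⟨⟨h1, h2⟩, -⟩
          exact hp (by cases p; simp_all)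
        · rw [if_neg hq]
    rw [Finset.sum_congr rfl fun p _ => e2 p, Finset.sum_ite_eq' univ (o r, d r)]
    simp
  have hrhs : (∑ p ∈ univ.filter (fun p : Fin n × Fin n => p.1 ∈ S ∧ p.2 ∉ S),
        pathFlow o d w P p.1 p.2)
      = ∑ r : R, ∑ p ∈ univ.filter (fun p : Fin n × Fin n => p.1 ∈ S ∧ p.2 ∉ S),
          (if (p.1, p.2) ∈ (fullSeq (o r) (d r) (P r)).zip (fullSeq (o r) (d r) (P r)).tail
            then w r else 0) := by
    unfold pathFlow
    rw [Finset.sum_comm]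
  rw [hsum1, hsum2, hsum3, hrhs, ← Finset.sum_add_distrib, ← Finset.sum_add_distrib]
  refine Finset.sum_le_sum fun r _ => ?_
  have hnn : ∀ p ∈ univ.filter (fun p : Fin n × Fin n => p.1 ∈ S ∧ p.2 ∉ S),
      (0:ℝ) ≤ (if (p.1, p.2) ∈ (fullSeq (o r) (d r) (P r)).zip (fullSeq (o r) (d r) (P r)).tail
        then w r else 0) := by
    intro p _
    split
    · exact hw r
    · exact le_rfl
  by_cases hC : (o r ∈ S ∧ d r ∉ S) ∨ (o r ∈ S ∧ d r ∈ S ∧ o r ∉ H ∧ al (o r) ∉ S) ∨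
      (o r ∉ S ∧ d r ∉ S ∧ o r ∉ H ∧ al (o r) ∈ S)
  · obtain ⟨p0, hp0mem, hp01, hp02⟩ := cross_main S H (o r) (d r) al (P r) (hP r).1
      (hSA1 r) (hal (o r)) hC
    have hL : (if o r ∈ S ∧ d r ∉ S then w r else 0)
        + (if o r ∈ S ∧ d r ∈ S ∧ o r ∉ H ∧ al (o r) ∉ S then w r else 0)
        + (if o r ∉ S ∧ d r ∉ S ∧ o r ∉ H ∧ al (o r) ∈ S then w r else 0) = w r := by
      rcases hC with h | h | h
      · simp [h.1, h.2]
      · simp [h.1, h.2.1, h.2.2.1, h.2.2.2]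
      · simp [h.1, h.2.1, h.2.2.1, h.2.2.2]
    rw [hL]
    have hle : w r ≤ (if (p0.1, p0.2) ∈ (fullSeq (o r) (d r) (P r)).zip
        (fullSeq (o r) (d r) (P r)).tail then w r else 0) := by
      simp [hp0mem]
    exact hle.trans (Finset.single_le_sum hnn (by simp [Finset.mem_filter, hp01, hp02]))
  · rw [if_neg (fun h => hC (Or.inl h)), if_neg (fun h => hC (Or.inr (Or.inl h))),
      if_neg (fun h => hC (Or.inr (Or.inr h)))]
    simpa using Finset.sum_nonneg hnn
end

section
/- Connectivity of the backbone network: let s̄ = (H, E') be a design solution and let S ⊂ V be such that no interhub edge of E' lies in the cutset δ(S). Then no commodity r with o^r ∈ H ∩ S and d^r ∈ H ∖ S admits a consistent r-path in the solution network of s̄. Consequently, if w_{km} > 0 for every ordered pair (k,m) of distinct nodes, then every design solution in whose solution network all commodities admit consistent r-paths satisfies the connectivity inequalities: Σ_{km ∈ δ(S)} y_{km} ≥ z_i + z_j − 1 for every S ⊂ V and every i ∈ S, j ∉ S, where z_k = 1 iff k ∈ H and y_{km} = 1 iff km ∈ E'. -/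
/-!
A consistent path between two hubs starts at the origin, ends at the destination and moves
only along interhub edges, so it never leaves a set `S` that no interhub edge leaves. When
every ordered pair carries positive demand, a commodity joins any hubs `i ∈ S`, `j ∉ S`; its
path must therefore use an edge of the cut, which makes the cut sum at least `1`.
-/

open scoped Classical
open Finset

theorem not_isRPath_of_no_edge_leaving {n : ℕ} {H : Finset (Fin n)}
    {E' : Finset (Fin n × Fin n)} {S : Finset (Fin n)}
    (hS : ∀ k m : Fin n, (k, m) ∈ E' → k ∈ S → m ∈ S) {a b : Fin n}
    (haH : a ∈ H) (haS : a ∈ S) (hbH : b ∈ H) (hbS : b ∉ S) (ks : List (Fin n)) :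
    ¬ IsRPath H E' a b ks := by
  rintro ⟨-, -, -, hchain, hhead, hlast⟩
  have hks_in_S : ∀ k ∈ ks, k ∈ S :=
    hchain.induction (· ∈ S) ks (fun x y => hS x y) fun hne => by
      rwa [Option.some_injective _ ((List.head?_eq_some_head hne).symm.trans (hhead haH))]
  exact hbS (hks_in_S b (List.mem_of_getLast? (hlast hbH)))

theorem exists_of_sum_ite_pos {ι M : Type*} [Fintype ι] [AddCommMonoid M] [Preorder M]
    {P : ι → Prop} [DecidablePred P] {f : ι → M}
    (h : 0 < ∑ r, if P r then f r else 0) : ∃ r, P r := by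
  by_contra! hP
  simp [hP] at h

theorem one_le_sum_cut_of_mem {n : ℕ} {E' : Finset (Fin n × Fin n)} {S : Finset (Fin n)}
    {k m : Fin n} (hkm : (k, m) ∈ E') (hk : k ∈ S) (hm : m ∉ S) :
    (1 : ℝ) ≤ ∑ p ∈ univ.filter (fun p : Fin n × Fin n => p.1 ∈ S ∧ p.2 ∉ S),
      (if p ∈ E' then (1 : ℝ) else 0) := by
  have hmem : (k, m) ∈ univ.filter (fun p : Fin n × Fin n => p.1 ∈ S ∧ p.2 ∉ S) := by
    simp [hk, hm]
  simpa [hkm] using Finset.single_le_sum (f := fun p => if p ∈ E' then (1 : ℝ) else 0)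
    (fun p _ => by positivity) hmem

theorem statement5_general {n : ℕ} {R : Type} [Fintype R]
    (o d : R → Fin n)
    (w : R → ℝ) :
    (∀ (H : Finset (Fin n)) (E' : Finset (Fin n × Fin n)),
      H.Nonempty →
      (∀ p ∈ E', p.1 ≠ p.2 ∧ p.1 ∈ H ∧ p.2 ∈ H ∧ (p.2, p.1) ∈ E') →
      ∀ S : Finset (Fin n),
        (∀ k m : Fin n, (k, m) ∈ E' → k ∈ S → m ∈ S) →
        ∀ r, o r ∈ H → o r ∈ S → d r ∈ H → d r ∉ S →
          ¬ ∃ ks, IsRPath H E' (o r) (d r) ks) ∧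
    ((∀ i j : Fin n, i ≠ j → 0 < ∑ r, if o r = i ∧ d r = j then w r else 0) →
      ∀ (H : Finset (Fin n)) (E' : Finset (Fin n × Fin n)),
        H.Nonempty →
        (∀ p ∈ E', p.1 ≠ p.2 ∧ p.1 ∈ H ∧ p.2 ∈ H ∧ (p.2, p.1) ∈ E') →
        (∀ r, ∃ ks, IsRPath H E' (o r) (d r) ks) →
        ∀ S : Finset (Fin n), ∀ i ∈ S, ∀ j ∉ S,
          (if i ∈ H then (1 : ℝ) else 0) + (if j ∈ H then (1 : ℝ) else 0) - 1 ≤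
            ∑ p ∈ univ.filter (fun p : Fin n × Fin n => p.1 ∈ S ∧ p.2 ∉ S),
              (if p ∈ E' then (1 : ℝ) else 0)) := by
  refine ⟨fun H E' _ _ S hS r hoH hoS hdH hdS ⟨ks, hks⟩ =>
    not_isRPath_of_no_edge_leaving hS hoH hoS hdH hdS ks hks, ?_⟩
  intro hpos H E' _ _ hpaths S i hiS j hjS
  have hcut_nonneg : (0 : ℝ) ≤ ∑ p ∈ univ.filter (fun p : Fin n × Fin n => p.1 ∈ S ∧ p.2 ∉ S),
      (if p ∈ E' then (1 : ℝ) else 0) := sum_nonneg fun p _ => by positivity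
  by_cases hij : i ∈ H ∧ j ∈ H
  · obtain ⟨r, rfl, rfl⟩ := exists_of_sum_ite_pos (hpos i j (by rintro rfl; exact hjS hiS))
    have hcross : ∃ k m : Fin n, (k, m) ∈ E' ∧ k ∈ S ∧ m ∉ S := by
      by_contra! hS
      obtain ⟨ks, hks⟩ := hpaths r
      exact not_isRPath_of_no_edge_leaving hS hij.1 hiS hij.2 hjS ks hks
    obtain ⟨k, m, hkm, hk, hm⟩ := hcross
    simpa [hij] using one_le_sum_cut_of_mem hkm hk hm
  · split_ifs with hi hj
    exacts [absurd ⟨hi, hj⟩ hij, by linarith, by linarith, by linarith]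

/-- Connectivity of the backbone network.  First part: if no interhub edge of
`E'` lies in the cutset `δ(S)`, then no commodity with origin a hub in `S` and
destination a hub outside `S` admits a consistent r-path.  Second part: if all
pairwise demands are positive, then every design solution in whose solution
network all commodities admit consistent r-paths satisfies the connectivity
inequalities `Σ_{km ∈ δ(S)} y_{km} ≥ z_i + z_j − 1` for all `S` and all
`i ∈ S`, `j ∉ S`. -/
theorem statement5 {n : ℕ} (hn : 2 ≤ n) {R : Type} [Fintype R]
    (o d : R → Fin n) (hod : ∀ r, o r ≠ d r)
    (w : R → ℝ) (hw : ∀ r, 0 ≤ w r)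
    (hinj : Function.Injective fun r => (o r, d r)) :
    (∀ (H : Finset (Fin n)) (E' : Finset (Fin n × Fin n)),
      H.Nonempty →
      (∀ p ∈ E', p.1 ≠ p.2 ∧ p.1 ∈ H ∧ p.2 ∈ H ∧ (p.2, p.1) ∈ E') →
      ∀ S : Finset (Fin n),
        (∀ k m : Fin n, (k, m) ∈ E' → k ∈ S → m ∈ S) →
        ∀ r, o r ∈ H → o r ∈ S → d r ∈ H → d r ∉ S →
          ¬ ∃ ks, IsRPath H E' (o r) (d r) ks) ∧
    ((∀ i j : Fin n, i ≠ j → 0 < ∑ r, if o r = i ∧ d r = j then w r else 0) →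
      ∀ (H : Finset (Fin n)) (E' : Finset (Fin n × Fin n)),
        H.Nonempty →
        (∀ p ∈ E', p.1 ≠ p.2 ∧ p.1 ∈ H ∧ p.2 ∈ H ∧ (p.2, p.1) ∈ E') →
        (∀ r, ∃ ks, IsRPath H E' (o r) (d r) ks) →
        ∀ S : Finset (Fin n), ∀ i ∈ S, ∀ j ∉ S,
          (if i ∈ H then (1 : ℝ) else 0) + (if j ∈ H then (1 : ℝ) else 0) - 1 ≤
            ∑ p ∈ univ.filter (fun p : Fin n × Fin n => p.1 ∈ S ∧ p.2 ∉ S),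
              (if p ∈ E' then (1 : ℝ) else 0)) :=
  statement5_general o d w
end

section
/- Proposition 1: Let s̄ be a design solution with its unique R-feasible flow f(s̄). Then for every design solution s, encoded by binary variables (z, y), whose unique R-feasible flow is (t, h¹, h²) = f(s), and for every edge ij ∈ E, the following inequalities hold: t_{ij} + Σ_{r∈R_{ij}(s̄)} w^r [ Σ_{k∈Z^r(s̄)} z_k + Σ_{km∈Y^r(s̄) : k,m∉Z^r(s̄)} y_{km} ] ≥ t_{ij}(s̄) · y_{ij}, and t_{ji} + Σ_{r∈R_{ji}(s̄)} w^r [ Σ_{k∈Z^r(s̄)} z_k + Σ_{km∈Y^r(s̄) : k,m∉Z^r(s̄)} y_{km} ] ≥ t_{ji}(s̄) · y_{ij}. -/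
open scoped Classical
open Finset

/-- `C^r_{km}`: unit routing cost of the H-median route through the ordered hub
pair `q = (k, m)` for a commodity with origin `a` and destination `b`:
`γ c_{a k} + α c_{k m} + θ c_{m b}` (legs with `a = k` or `m = b` are empty and
cost `0`, using `c_{ii} = 0`). -/
def routeCost {n : ℕ} (c : Fin n → Fin n → ℝ) (γ α θ : ℝ) (a b : Fin n)
    (q : Fin n × Fin n) : ℝ :=
  γ * c a q.1 + α * c q.1 q.2 + θ * c q.2 b

/-- The route through the ordered hub pair `q` is available in the design
solution with hub set `H` and interhub edge set `E'` (encoded as a set of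
ordered pairs of distinct hubs, closed under swapping). -/
def Avail {n : ℕ} (H : Finset (Fin n)) (E' : Finset (Fin n × Fin n))
    (q : Fin n × Fin n) : Prop :=
  (q.1 = q.2 ∧ q.1 ∈ H) ∨ (q.1 ≠ q.2 ∧ q ∈ E')

/-- `P` selects, for every commodity, a shortest available route of the design
solution `(H, E')`; under the genericity assumption this shortest route
`P^r(s)` is unique, and `C^r(s) = routeCost … (P r)`. -/
def IsShortest {n : ℕ} {R : Type} (c : Fin n → Fin n → ℝ) (γ α θ : ℝ)
    (o d : R → Fin n) (H : Finset (Fin n)) (E' : Finset (Fin n × Fin n))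
    (P : R → Fin n × Fin n) : Prop :=
  ∀ r, Avail H E' (P r) ∧
    ∀ q, Avail H E' q →
      routeCost c γ α θ (o r) (d r) (P r) ≤ routeCost c γ α θ (o r) (d r) q

/-- `k ∈ Z^r(s̄)`, for the reference design solution with shortest routes `Pb`:
`C^r_{kk} < C^r(s̄)`. -/
def ZSet {n : ℕ} {R : Type} (c : Fin n → Fin n → ℝ) (γ α θ : ℝ)
    (o d : R → Fin n) (Pb : R → Fin n × Fin n) (r : R) (k : Fin n) : Prop :=
  routeCost c γ α θ (o r) (d r) (k, k) < routeCost c γ α θ (o r) (d r) (Pb r)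

/-- `km ∈ Y^r(s̄)`, for the reference design solution with shortest routes `Pb`:
`min(C^r_{km}, C^r_{mk}) < min(C^r(s̄), C^r_{kk}, C^r_{mm})`. -/
def YSet {n : ℕ} {R : Type} (c : Fin n → Fin n → ℝ) (γ α θ : ℝ)
    (o d : R → Fin n) (Pb : R → Fin n × Fin n) (r : R) (k m : Fin n) : Prop :=
  min (routeCost c γ α θ (o r) (d r) (k, m)) (routeCost c γ α θ (o r) (d r) (m, k)) <
    min (routeCost c γ α θ (o r) (d r) (Pb r))
      (min (routeCost c γ α θ (o r) (d r) (k, k)) (routeCost c γ α θ (o r) (d r) (m, m)))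

/-- `t_{ij}`: total demand routed on arc `(i, j)` as an interhub arc by the
R-feasible flow induced by the routes `P`;  for a reference solution `s̄` this
is `t_{ij}(s̄)`. -/
def tFlow {n : ℕ} {R : Type} [Fintype R] (w : R → ℝ) (P : R → Fin n × Fin n)
    (i j : Fin n) : ℝ :=
  ∑ r, if P r = (i, j) ∧ i ≠ j then w r else 0

/-- `h¹_{ai}`: total demand routed on arc `(a, i)` as an access arc by the
R-feasible flow induced by the routes `P`. -/
def h1Flow {n : ℕ} {R : Type} [Fintype R] (w : R → ℝ) (o : R → Fin n)
    (P : R → Fin n × Fin n) (a i : Fin n) : ℝ :=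
  ∑ r, if o r = a ∧ (P r).1 = i ∧ a ≠ i then w r else 0

/-- `h²_{jb}`: total demand routed on arc `(j, b)` as a distribution arc by the
R-feasible flow induced by the routes `P`. -/
def h2Flow {n : ℕ} {R : Type} [Fintype R] (w : R → ℝ) (d : R → Fin n)
    (P : R → Fin n × Fin n) (j b : Fin n) : ℝ :=
  ∑ r, if d r = b ∧ (P r).2 = j ∧ j ≠ b then w r else 0

/-- `z_k`: the binary variable encoding whether `k` is a hub. -/
def zInd {n : ℕ} (H : Finset (Fin n)) (k : Fin n) : ℝ := if k ∈ H then 1 else 0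

/-- `y_{km}`: the binary variable encoding whether `km` is an interhub edge. -/
def yInd {n : ℕ} (E' : Finset (Fin n × Fin n)) (k m : Fin n) : ℝ :=
  if (k, m) ∈ E' then 1 else 0

/-- `Σ_{k ∈ Z^r(s̄)} z_k`. -/
noncomputable def ZSum {n : ℕ} {R : Type} (c : Fin n → Fin n → ℝ) (γ α θ : ℝ)
    (o d : R → Fin n) (Pb : R → Fin n × Fin n) (z : Fin n → ℝ) (r : R) : ℝ :=
  ∑ k ∈ univ.filter (fun k => ZSet c γ α θ o d Pb r k), z k

/-- `Σ_{km ∈ Y^r(s̄) : k, m ∉ Z^r(s̄)} y_{km}` (edges are represented by their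
ordered pair of endpoints with `k < m`). -/
noncomputable def YSum {n : ℕ} {R : Type} (c : Fin n → Fin n → ℝ) (γ α θ : ℝ)
    (o d : R → Fin n) (Pb : R → Fin n × Fin n) (y : Fin n → Fin n → ℝ) (r : R) : ℝ :=
  ∑ p ∈ univ.filter (fun p : Fin n × Fin n =>
      p.1 < p.2 ∧ YSet c γ α θ o d Pb r p.1 p.2 ∧
      ¬ ZSet c γ α θ o d Pb r p.1 ∧ ¬ ZSet c γ α θ o d Pb r p.2),
    y p.1 p.2

/-- `Σ_{km ∈ E : k, m ∈ Z^r(s̄)} y_{km}`. -/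
noncomputable def ZZSum {n : ℕ} {R : Type} (c : Fin n → Fin n → ℝ) (γ α θ : ℝ)
    (o d : R → Fin n) (Pb : R → Fin n × Fin n) (y : Fin n → Fin n → ℝ) (r : R) : ℝ :=
  ∑ p ∈ univ.filter (fun p : Fin n × Fin n =>
      p.1 < p.2 ∧ ZSet c γ α θ o d Pb r p.1 ∧ ZSet c γ α θ o d Pb r p.2),
    y p.1 p.2

/-- The sum `Σ*` of `y_{km}` over the edges `km ∈ Y^r(s̄)` with `k, m ∉ Z^r(s̄)`
whose cheaper orientation (the one attaining `min(C^r_{km}, C^r_{mk})`) does not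
have `i` as its first hub. -/
noncomputable def YSumAcc {n : ℕ} {R : Type} (c : Fin n → Fin n → ℝ) (γ α θ : ℝ)
    (o d : R → Fin n) (Pb : R → Fin n × Fin n) (y : Fin n → Fin n → ℝ) (r : R)
    (i : Fin n) : ℝ :=
  ∑ p ∈ univ.filter (fun p : Fin n × Fin n =>
      p.1 < p.2 ∧ YSet c γ α θ o d Pb r p.1 p.2 ∧
      ¬ ZSet c γ α θ o d Pb r p.1 ∧ ¬ ZSet c γ α θ o d Pb r p.2 ∧
      (if routeCost c γ α θ (o r) (d r) (p.1, p.2) ≤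
          routeCost c γ α θ (o r) (d r) (p.2, p.1) then p.1 else p.2) ≠ i),
    y p.1 p.2

/-- The sum `Σ**` of `y_{km}` over the edges `km ∈ Y^r(s̄)` with `k, m ∉ Z^r(s̄)`
whose cheaper orientation (the one attaining `min(C^r_{km}, C^r_{mk})`) does not
have `j` as its second hub. -/
noncomputable def YSumDist {n : ℕ} {R : Type} (c : Fin n → Fin n → ℝ) (γ α θ : ℝ)
    (o d : R → Fin n) (Pb : R → Fin n × Fin n) (y : Fin n → Fin n → ℝ) (r : R)
    (j : Fin n) : ℝ :=
  ∑ p ∈ univ.filter (fun p : Fin n × Fin n =>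
      p.1 < p.2 ∧ YSet c γ α θ o d Pb r p.1 p.2 ∧
      ¬ ZSet c γ α θ o d Pb r p.1 ∧ ¬ ZSet c γ α θ o d Pb r p.2 ∧
      (if routeCost c γ α θ (o r) (d r) (p.1, p.2) ≤
          routeCost c γ α θ (o r) (d r) (p.2, p.1) then p.2 else p.1) ≠ j),
    y p.1 p.2

/-- Proposition 1: interhub optimality inequalities.  For a reference design
solution `s̄ = (Hb, Eb)` with unique R-feasible flow induced by the shortest
routes `Pb`, and any design solution `s = (Hs, Es)` with unique R-feasible flow
induced by the shortest routes `P`, for every edge `ij ∈ E`: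
`t_{ij} + Σ_{r∈R_{ij}(s̄)} w^r [Σ_{k∈Z^r(s̄)} z_k + Σ_{km∈Y^r(s̄):k,m∉Z^r(s̄)} y_{km}]
  ≥ t_{ij}(s̄) y_{ij}`, and the analogous inequality for arc `(j, i)`. -/
theorem statement6 {n : ℕ} (hn : 2 ≤ n) {R : Type} [Fintype R]
    (c : Fin n → Fin n → ℝ) (hc : ∀ i j, 0 ≤ c i j) (hcd : ∀ i, c i i = 0)
    (o d : R → Fin n) (hod : ∀ r, o r ≠ d r)
    (w : R → ℝ) (hw : ∀ r, 0 ≤ w r)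
    (hinj : Function.Injective fun r => (o r, d r))
    (γ α θ : ℝ) (hα0 : 0 ≤ α) (hα1 : α ≤ 1) (hγ : α < γ) (hθ : α < θ)
    (hgen : ∀ r, Function.Injective fun q : Fin n × Fin n =>
      routeCost c γ α θ (o r) (d r) q)
    (Hb : Finset (Fin n)) (hHb : Hb.Nonempty)
    (Eb : Finset (Fin n × Fin n))
    (hEb : ∀ p ∈ Eb, p.1 ≠ p.2 ∧ p.1 ∈ Hb ∧ p.2 ∈ Hb ∧ (p.2, p.1) ∈ Eb)
    (Pb : R → Fin n × Fin n) (hPb : IsShortest c γ α θ o d Hb Eb Pb)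
    (Hs : Finset (Fin n)) (hHs : Hs.Nonempty)
    (Es : Finset (Fin n × Fin n))
    (hEs : ∀ p ∈ Es, p.1 ≠ p.2 ∧ p.1 ∈ Hs ∧ p.2 ∈ Hs ∧ (p.2, p.1) ∈ Es)
    (P : R → Fin n × Fin n) (hP : IsShortest c γ α θ o d Hs Es P)
    (i j : Fin n) (hij : i ≠ j) :
    tFlow w Pb i j * yInd Es i j ≤
      tFlow w P i j +
        (∑ r ∈ univ.filter (fun r => Pb r = (i, j)),
          w r * (ZSum c γ α θ o d Pb (zInd Hs) r +
            YSum c γ α θ o d Pb (yInd Es) r)) ∧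
    tFlow w Pb j i * yInd Es i j ≤
      tFlow w P j i +
        (∑ r ∈ univ.filter (fun r => Pb r = (j, i)),
          w r * (ZSum c γ α θ o d Pb (zInd Hs) r +
            YSum c γ α θ o d Pb (yInd Es) r)) := by
  classical
  have hz01 : ∀ k, 0 ≤ zInd Hs k := by
    intro k; unfold zInd; split <;> norm_num
  have hy01 : ∀ k m, 0 ≤ yInd Es k m := by
    intro k m; unfold yInd; split <;> norm_num
  have hZnn : ∀ r, 0 ≤ ZSum c γ α θ o d Pb (zInd Hs) r :=
    fun r => Finset.sum_nonneg fun k _ => hz01 k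
  have hYnn : ∀ r, 0 ≤ YSum c γ α θ o d Pb (yInd Es) r :=
    fun r => Finset.sum_nonneg fun p _ => hy01 p.1 p.2
  have key1 : ∀ (a b : Fin n), a ≠ b → (a, b) ∈ Es → ∀ r, Pb r = (a, b) → P r ≠ (a, b) →
      1 ≤ ZSum c γ α θ o d Pb (zInd Hs) r + YSum c γ α θ o d Pb (yInd Es) r := by
    intro a b hab hmem r hPbr hPr
    have havail : Avail Hs Es (a, b) := Or.inr ⟨hab, hmem⟩
    have hle := (hP r).2 (a, b) havail
    have hlt : routeCost c γ α θ (o r) (d r) (P r) <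
        routeCost c γ α θ (o r) (d r) (Pb r) := by
      rw [hPbr]
      exact lt_of_le_of_ne hle (fun h => hPr (hgen r h))
    have hZone : ∀ k : Fin n, k ∈ Hs → ZSet c γ α θ o d Pb r k →
        1 ≤ ZSum c γ α θ o d Pb (zInd Hs) r + YSum c γ α θ o d Pb (yInd Es) r := by
      intro k hk hZ
      have h1 : (1:ℝ) ≤ ZSum c γ α θ o d Pb (zInd Hs) r := by
        have := Finset.single_le_sum (f := fun k => zInd Hs k)
          (fun k _ => hz01 k) (Finset.mem_filter.mpr ⟨Finset.mem_univ k, hZ⟩)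
        simpa [ZSum, zInd, hk] using this
      linarith [hYnn r]
    rcases (hP r).1 with ⟨heq, hk⟩ | ⟨hne, hEsq⟩
    · refine hZone (P r).1 hk ?_
      unfold ZSet
      have hq : ((P r).1, (P r).1) = P r := Prod.ext rfl heq
      rw [hq]; exact hlt
    · obtain ⟨hne', h1s, h2s, hswap⟩ := hEs _ hEsq
      by_cases hZ1 : ZSet c γ α θ o d Pb r (P r).1
      · exact hZone _ h1s hZ1
      by_cases hZ2 : ZSet c γ α θ o d Pb r (P r).2
      · exact hZone _ h2s hZ2
      have hB1 : routeCost c γ α θ (o r) (d r) (Pb r) ≤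
          routeCost c γ α θ (o r) (d r) ((P r).1, (P r).1) := not_lt.mp hZ1
      have hB2 : routeCost c γ α θ (o r) (d r) (Pb r) ≤
          routeCost c γ α θ (o r) (d r) ((P r).2, (P r).2) := not_lt.mp hZ2
      have hq : ((P r).1, (P r).2) = P r := rfl
      have hYone : ∀ (u v : Fin n), u < v →
          YSet c γ α θ o d Pb r u v → ¬ ZSet c γ α θ o d Pb r u →
          ¬ ZSet c γ α θ o d Pb r v → (u, v) ∈ Es →
          1 ≤ ZSum c γ α θ o d Pb (zInd Hs) r + YSum c γ α θ o d Pb (yInd Es) r := by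
        intro u v huv hY hnz1 hnz2 hmem'
        have h1 : (1:ℝ) ≤ YSum c γ α θ o d Pb (yInd Es) r := by
          have hmemp : ((u, v) : Fin n × Fin n) ∈ univ.filter (fun p : Fin n × Fin n =>
              p.1 < p.2 ∧ YSet c γ α θ o d Pb r p.1 p.2 ∧
              ¬ ZSet c γ α θ o d Pb r p.1 ∧ ¬ ZSet c γ α θ o d Pb r p.2) :=
            Finset.mem_filter.mpr ⟨Finset.mem_univ _, huv, hY, hnz1, hnz2⟩
          have := Finset.single_le_sum (f := fun p : Fin n × Fin n => yInd Es p.1 p.2)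
            (fun p _ => hy01 p.1 p.2) hmemp
          simpa [YSum, yInd, hmem'] using this
        linarith [hZnn r]
      rcases hne.lt_or_gt with h | h
      · refine hYone (P r).1 (P r).2 h ?_ hZ1 hZ2 (by rw [hq]; exact hEsq)
        unfold YSet
        rw [lt_min_iff, lt_min_iff]
        have hmin := min_le_left (routeCost c γ α θ (o r) (d r) ((P r).1, (P r).2))
          (routeCost c γ α θ (o r) (d r) ((P r).2, (P r).1))
        rw [hq] at hmin
        exact ⟨lt_of_le_of_lt hmin hlt, lt_of_le_of_lt hmin (lt_of_lt_of_le hlt hB1),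
          lt_of_le_of_lt hmin (lt_of_lt_of_le hlt hB2)⟩
      · refine hYone (P r).2 (P r).1 h ?_ hZ2 hZ1 hswap
        unfold YSet
        rw [lt_min_iff, lt_min_iff]
        have hmin := min_le_right (routeCost c γ α θ (o r) (d r) ((P r).2, (P r).1))
          (routeCost c γ α θ (o r) (d r) ((P r).1, (P r).2))
        rw [hq] at hmin
        exact ⟨lt_of_le_of_lt hmin hlt, lt_of_le_of_lt hmin (lt_of_lt_of_le hlt hB2),
          lt_of_le_of_lt hmin (lt_of_lt_of_le hlt hB1)⟩
  have htnn : ∀ (Q : R → Fin n × Fin n) (a b : Fin n), 0 ≤ tFlow w Q a b := by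
    intro Q a b
    refine Finset.sum_nonneg fun r _ => ?_
    split <;> first | exact hw r | exact le_rfl
  have main : ∀ (a b : Fin n), a ≠ b → (a, b) ∈ Es →
      tFlow w Pb a b ≤ tFlow w P a b +
        (∑ r ∈ univ.filter (fun r => Pb r = (a, b)),
          w r * (ZSum c γ α θ o d Pb (zInd Hs) r +
            YSum c γ α θ o d Pb (yInd Es) r)) := by
    intro a b hab hmem
    have h1 : tFlow w Pb a b = ∑ r ∈ univ.filter (fun r => Pb r = (a, b)), w r := by
      unfold tFlow
      rw [Finset.sum_filter]
      exact Finset.sum_congr rfl fun r _ => by simp [hab]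
    have h2 : ∑ r ∈ univ.filter (fun r => Pb r = (a, b)),
        (if P r = (a, b) then w r else 0) ≤ tFlow w P a b := by
      unfold tFlow
      have heq : ∀ r : R, (if P r = (a, b) ∧ a ≠ b then w r else 0)
          = (if P r = (a, b) then w r else 0) := fun r => by simp [hab]
      simp only [heq]
      refine Finset.sum_le_sum_of_subset_of_nonneg (Finset.filter_subset _ _) ?_
      intro r _ _
      split <;> first | exact hw r | exact le_rfl
    rw [h1]
    have h3 : ∑ r ∈ univ.filter (fun r => Pb r = (a, b)), w r ≤
        ∑ r ∈ univ.filter (fun r => Pb r = (a, b)),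
          ((if P r = (a, b) then w r else 0) +
            w r * (ZSum c γ α θ o d Pb (zInd Hs) r +
              YSum c γ α θ o d Pb (yInd Es) r)) := by
      refine Finset.sum_le_sum fun r hr => ?_
      have hPbr : Pb r = (a, b) := (Finset.mem_filter.mp hr).2
      by_cases hPr : P r = (a, b)
      · rw [if_pos hPr]
        have := mul_nonneg (hw r) (by linarith [hZnn r, hYnn r] :
          (0:ℝ) ≤ ZSum c γ α θ o d Pb (zInd Hs) r + YSum c γ α θ o d Pb (yInd Es) r)
        linarith
      · rw [if_neg hPr]
        have hk := key1 a b hab hmem r hPbr hPr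
        nlinarith [hw r]
    rw [Finset.sum_add_distrib] at h3
    linarith
  constructor
  · by_cases hy : (i, j) ∈ Es
    · have : yInd Es i j = 1 := by simp [yInd, hy]
      rw [this, mul_one]
      exact main i j hij hy
    · have : yInd Es i j = 0 := by simp [yInd, hy]
      rw [this, mul_zero]
      have hs : 0 ≤ ∑ r ∈ univ.filter (fun r => Pb r = (i, j)),
          w r * (ZSum c γ α θ o d Pb (zInd Hs) r + YSum c γ α θ o d Pb (yInd Es) r) :=
        Finset.sum_nonneg fun r _ => mul_nonneg (hw r) (by linarith [hZnn r, hYnn r])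
      linarith [htnn P i j]
  · by_cases hy : (i, j) ∈ Es
    · have : yInd Es i j = 1 := by simp [yInd, hy]
      rw [this, mul_one]
      exact main j i hij.symm (hEs _ hy).2.2.2
    · have : yInd Es i j = 0 := by simp [yInd, hy]
      rw [this, mul_zero]
      have hs : 0 ≤ ∑ r ∈ univ.filter (fun r => Pb r = (j, i)),
          w r * (ZSum c γ α θ o d Pb (zInd Hs) r + YSum c γ α θ o d Pb (yInd Es) r) :=
        Finset.sum_nonneg fun r _ => mul_nonneg (hw r) (by linarith [hZnn r, hYnn r])
      linarith [htnn P j i]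
end

section
/- Self-instantiation of the optimality inequalities forces domination of the R-feasible flow: let s̄ be a design solution encoded by (z̄, ȳ), with unique R-feasible flow f(s̄) = (t(s̄), h¹(s̄), h²(s̄)), and let (t̄, h̄¹, h̄²) be nonnegative arc vectors satisfying, with design variables (z, y) = (z̄, ȳ) and flow variables (t, h¹, h²) = (t̄, h̄¹, h̄²): for every edge ij ∈ E, t_{ij} + Σ_{r∈R_{ij}(s̄)} w^r [ Σ_{k∈Z^r(s̄)} z_k + Σ_{km∈Y^r(s̄): k,m∉Z^r(s̄)} y_{km} − Σ_{km∈E: k,m∈Z^r(s̄)} y_{km} ] ≥ t_{ij}(s̄) y_{ij} and the analogous inequality for arc (j,i); for every arc (o,i), h¹_{oi} + Σ_{r∈R¹_{oi}(s̄)} w^r [ Σ_{k∈Z^r(s̄)} z_k + Σ* y_{km} − Σ_{km∈E: k,m∈Z^r(s̄)} y_{km} ] ≥ Σ_{r∈R^{1,1}_{oi}(s̄)} w^r z_i + Σ_{r∈R^{1,2}_{oi}(s̄)} w^r y_{i,j^r(i)} (Σ* over km ∈ Y^r(s̄) with k,m ∉ Z^r(s̄) whose cheaper orientation does not have i as first hub);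 for every arc (j,d), h²_{jd} + Σ_{r∈R²_{jd}(s̄)} w^r [ Σ_{k∈Z^r(s̄)} z_k + Σ** y_{km} − Σ_{km∈E: k,m∈Z^r(s̄)} y_{km} ] ≥ Σ_{r∈R^{2,1}_{jd}(s̄)} w^r z_j + Σ_{r∈R^{2,2}_{jd}(s̄)} w^r y_{i^r(j),j} (Σ** over km ∈ Y^r(s̄) with k,m ∉ Z^r(s̄) whose cheaper orientation does not have j as second hub). Then t̄_{ij} ≥ t_{ij}(s̄) and t̄_{ji} ≥ t_{ji}(s̄) for every edge ij ∈ E'(s̄), h̄¹_{oi} ≥ h¹_{oi}(s̄) for every arc (o,i), and h̄²_{jd} ≥ h²_{jd}(s̄) for every arc (j,d); consequently Σ_{(i,j)∈A} c_{ij}(γ h̄¹_{ij} + α t̄_{ij} + θ h̄²_{ij}) ≥ Σ_{r∈R} w^r C^r(s̄). -/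
open scoped Classical
open Finset

/-- Self-instantiation of the optimality inequalities forces domination of the
R-feasible flow: if the nonnegative arc vectors `(tb, h1b, h2b)` satisfy the
reinforced interhub, access and distribution optimality inequalities generated
by the reference design solution `s̄ = (Hb, Eb)` (with unique R-feasible flow
induced by the shortest routes `Pb`), instantiated at the design variables
`(z, y) = (z̄, ȳ)` of `s̄` itself, then they dominate the R-feasible flow of
`s̄` componentwise, and consequently their routing cost is at least
`Σ_r w^r C^r(s̄)`. -/
theorem statement10 {n : ℕ} (hn : 2 ≤ n) {R : Type} [Fintype R]
    (c : Fin n → Fin n → ℝ) (hc : ∀ i j, 0 ≤ c i j) (hcd : ∀ i, c i i = 0)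
    (o d : R → Fin n) (hod : ∀ r, o r ≠ d r)
    (w : R → ℝ) (hw : ∀ r, 0 ≤ w r)
    (hinj : Function.Injective fun r => (o r, d r))
    (γ α θ : ℝ) (hα0 : 0 ≤ α) (hα1 : α ≤ 1) (hγ : α < γ) (hθ : α < θ)
    (hgen : ∀ r, Function.Injective fun q : Fin n × Fin n =>
      routeCost c γ α θ (o r) (d r) q)
    (Hb : Finset (Fin n)) (hHb : Hb.Nonempty)
    (Eb : Finset (Fin n × Fin n))
    (hEb : ∀ p ∈ Eb, p.1 ≠ p.2 ∧ p.1 ∈ Hb ∧ p.2 ∈ Hb ∧ (p.2, p.1) ∈ Eb)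
    (Pb : R → Fin n × Fin n) (hPb : IsShortest c γ α θ o d Hb Eb Pb)
    (tb h1b h2b : Fin n → Fin n → ℝ)
    (hnn : ∀ i j, 0 ≤ tb i j ∧ 0 ≤ h1b i j ∧ 0 ≤ h2b i j)
    (hInter : ∀ i j : Fin n, i ≠ j →
      tFlow w Pb i j * yInd Eb i j ≤
        tb i j +
          (∑ r ∈ univ.filter (fun r => Pb r = (i, j)),
            w r * (ZSum c γ α θ o d Pb (zInd Hb) r +
              YSum c γ α θ o d Pb (yInd Eb) r -
              ZZSum c γ α θ o d Pb (yInd Eb) r)))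
    (hAcc : ∀ a i : Fin n, a ≠ i →
      (∑ r ∈ univ.filter (fun r => o r = a ∧ Pb r = (i, i)), w r * zInd Hb i) +
          (∑ r ∈ univ.filter (fun r => o r = a ∧ (Pb r).1 = i ∧ (Pb r).2 ≠ i),
            w r * yInd Eb i (Pb r).2) ≤
        h1b a i +
          (∑ r ∈ univ.filter (fun r => o r = a ∧ (Pb r).1 = i),
            w r * (ZSum c γ α θ o d Pb (zInd Hb) r +
              YSumAcc c γ α θ o d Pb (yInd Eb) r i -
              ZZSum c γ α θ o d Pb (yInd Eb) r)))
    (hDist : ∀ j b : Fin n, j ≠ b →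
      (∑ r ∈ univ.filter (fun r => d r = b ∧ Pb r = (j, j)), w r * zInd Hb j) +
          (∑ r ∈ univ.filter (fun r => d r = b ∧ (Pb r).2 = j ∧ (Pb r).1 ≠ j),
            w r * yInd Eb (Pb r).1 j) ≤
        h2b j b +
          (∑ r ∈ univ.filter (fun r => d r = b ∧ (Pb r).2 = j),
            w r * (ZSum c γ α θ o d Pb (zInd Hb) r +
              YSumDist c γ α θ o d Pb (yInd Eb) r j -
              ZZSum c γ α θ o d Pb (yInd Eb) r))) :
    (∀ i j : Fin n, (i, j) ∈ Eb →
      tFlow w Pb i j ≤ tb i j ∧ tFlow w Pb j i ≤ tb j i) ∧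
    (∀ a i : Fin n, a ≠ i → h1Flow w o Pb a i ≤ h1b a i) ∧
    (∀ j b : Fin n, j ≠ b → h2Flow w d Pb j b ≤ h2b j b) ∧
    (∑ r, w r * routeCost c γ α θ (o r) (d r) (Pb r)) ≤
      ∑ p ∈ univ.filter (fun p : Fin n × Fin n => p.1 ≠ p.2),
        c p.1 p.2 * (γ * h1b p.1 p.2 + α * tb p.1 p.2 + θ * h2b p.1 p.2) := by
    classical
  -- Abbreviation
  set F : Finset (Fin n × Fin n) := univ.filter (fun p : Fin n × Fin n => p.1 ≠ p.2) with hF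
  -- Vanishing of Z-sums at the reference solution
  have hz0 : ∀ r : R, ZSum c γ α θ o d Pb (zInd Hb) r = 0 := by
    intro r
    refine Finset.sum_eq_zero fun k hk => ?_
    rw [Finset.mem_filter] at hk
    unfold zInd
    split_ifs with hkH
    · have h1 := (hPb r).2 (k, k) (Or.inl ⟨rfl, hkH⟩)
      have h2 := hk.2
      unfold ZSet at h2
      exact absurd h2 (not_lt.mpr h1)
    · rfl
  -- Vanishing of the y-variable on any Y-set edge
  have hyElem : ∀ (r : R) (p : Fin n × Fin n), p.1 < p.2 →
      YSet c γ α θ o d Pb r p.1 p.2 → yInd Eb p.1 p.2 = 0 := by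
    intro r p hlt hY
    unfold yInd
    split_ifs with hE
    · exfalso
      have hne : p.1 ≠ p.2 := ne_of_lt hlt
      have h1 := (hPb r).2 (p.1, p.2) (Or.inr ⟨hne, hE⟩)
      have h2 := (hPb r).2 (p.2, p.1) (Or.inr ⟨hne.symm, (hEb _ hE).2.2.2⟩)
      unfold YSet at hY
      have h3 := lt_of_lt_of_le hY (min_le_left _ _)
      rcases min_lt_iff.mp h3 with h | h <;> linarith
    · rfl
  have hy0 : ∀ r : R, YSum c γ α θ o d Pb (yInd Eb) r = 0 := by
    intro r
    refine Finset.sum_eq_zero fun p hp => ?_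
    rw [Finset.mem_filter] at hp
    exact hyElem r p hp.2.1 hp.2.2.1
  have hyAcc0 : ∀ (r : R) (i : Fin n), YSumAcc c γ α θ o d Pb (yInd Eb) r i = 0 := by
    intro r i
    refine Finset.sum_eq_zero fun p hp => ?_
    rw [Finset.mem_filter] at hp
    exact hyElem r p hp.2.1 hp.2.2.1
  have hyDist0 : ∀ (r : R) (j : Fin n), YSumDist c γ α θ o d Pb (yInd Eb) r j = 0 := by
    intro r j
    refine Finset.sum_eq_zero fun p hp => ?_
    rw [Finset.mem_filter] at hp
    exact hyElem r p hp.2.1 hp.2.2.1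
  have hzz0 : ∀ r : R, 0 ≤ ZZSum c γ α θ o d Pb (yInd Eb) r := by
    intro r
    refine Finset.sum_nonneg fun p _ => ?_
    unfold yInd
    split_ifs <;> norm_num
  -- the self-instantiated correction terms are nonpositive
  have hSI : ∀ (s : Finset R) (Y : R → ℝ), (∀ r, Y r = 0) →
      (∑ r ∈ s, w r * (ZSum c γ α θ o d Pb (zInd Hb) r + Y r -
        ZZSum c γ α θ o d Pb (yInd Eb) r)) ≤ 0 := by
    intro s Y hY
    refine Finset.sum_nonpos fun r _ => ?_
    rw [hz0 r, hY r]
    have h3 := hzz0 r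
    nlinarith [hw r, mul_nonneg (hw r) h3]
  -- domination of the interhub flow
  have key_t : ∀ i j : Fin n, i ≠ j → tFlow w Pb i j ≤ tb i j := by
    intro i j hij
    by_cases hE : (i, j) ∈ Eb
    · have h := hInter i j hij
      have hy : yInd Eb i j = 1 := by unfold yInd; rw [if_pos hE]
      have hS := hSI (univ.filter (fun r => Pb r = (i, j)))
        (fun r => YSum c γ α θ o d Pb (yInd Eb) r) (fun r => hy0 r)
      rw [hy, mul_one] at h
      linarith
    · have h0 : tFlow w Pb i j = 0 := by
        refine Finset.sum_eq_zero fun r _ => ?_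
        split_ifs with h
        · exfalso
          rcases (hPb r).1 with ⟨heq, _⟩ | ⟨_, hmem⟩
          · rw [h.1] at heq; exact h.2 heq
          · rw [h.1] at hmem; exact hE hmem
        · rfl
      rw [h0]; exact (hnn i j).1
  -- domination of the access flow
  have key_h1 : ∀ a i : Fin n, a ≠ i → h1Flow w o Pb a i ≤ h1b a i := by
    intro a i hai
    have h := hAcc a i hai
    have hS := hSI (univ.filter (fun r => o r = a ∧ (Pb r).1 = i))
      (fun r => YSumAcc c γ α θ o d Pb (yInd Eb) r i) (fun r => hyAcc0 r i)
    have hle : h1Flow w o Pb a i ≤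
        (∑ r ∈ univ.filter (fun r => o r = a ∧ Pb r = (i, i)), w r * zInd Hb i) +
        (∑ r ∈ univ.filter (fun r => o r = a ∧ (Pb r).1 = i ∧ (Pb r).2 ≠ i),
          w r * yInd Eb i (Pb r).2) := by
      unfold h1Flow
      rw [Finset.sum_filter, Finset.sum_filter, ← Finset.sum_add_distrib]
      refine Finset.sum_le_sum fun r _ => ?_
      have hz_nn : 0 ≤ zInd Hb i := by unfold zInd; split_ifs <;> norm_num
      have hy_nn : 0 ≤ yInd Eb i (Pb r).2 := by unfold yInd; split_ifs <;> norm_num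
      by_cases h1 : o r = a ∧ (Pb r).1 = i ∧ a ≠ i
      · rw [if_pos h1]
        by_cases h2 : (Pb r).2 = i
        · have hP : Pb r = (i, i) := Prod.ext_iff.mpr ⟨h1.2.1, h2⟩
          have hiH : i ∈ Hb := by
            rcases (hPb r).1 with ⟨_, hm⟩ | ⟨hne, _⟩
            · rw [hP] at hm; exact hm
            · rw [hP] at hne; exact absurd rfl hne
          have hz1 : zInd Hb i = 1 := by unfold zInd; rw [if_pos hiH]
          rw [if_pos ⟨h1.1, hP⟩, if_neg (by rw [hP]; rintro ⟨_, _, hne⟩; exact hne rfl),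
            hz1]
          simp
        · have hEmem : (i, (Pb r).2) ∈ Eb := by
            rcases (hPb r).1 with ⟨heq, _⟩ | ⟨_, hm⟩
            · exact absurd (heq.symm.trans h1.2.1) h2
            · have hpe : (i, (Pb r).2) = Pb r := by
                rw [← h1.2.1]
              rw [hpe]; exact hm
          have hy1 : yInd Eb i (Pb r).2 = 1 := by unfold yInd; rw [if_pos hEmem]
          rw [if_neg (by rintro ⟨_, hP⟩; exact h2 (by rw [hP])),
            if_pos ⟨h1.1, h1.2.1, h2⟩, hy1]
          simp
      · rw [if_neg h1]
        have := hw r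
        refine add_nonneg ?_ ?_ <;> split_ifs <;> first
          | positivity
          | norm_num
    linarith
  -- domination of the distribution flow
  have key_h2 : ∀ j b : Fin n, j ≠ b → h2Flow w d Pb j b ≤ h2b j b := by
    intro j b hjb
    have h := hDist j b hjb
    have hS := hSI (univ.filter (fun r => d r = b ∧ (Pb r).2 = j))
      (fun r => YSumDist c γ α θ o d Pb (yInd Eb) r j) (fun r => hyDist0 r j)
    have hle : h2Flow w d Pb j b ≤
        (∑ r ∈ univ.filter (fun r => d r = b ∧ Pb r = (j, j)), w r * zInd Hb j) +
        (∑ r ∈ univ.filter (fun r => d r = b ∧ (Pb r).2 = j ∧ (Pb r).1 ≠ j),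
          w r * yInd Eb (Pb r).1 j) := by
      unfold h2Flow
      rw [Finset.sum_filter, Finset.sum_filter, ← Finset.sum_add_distrib]
      refine Finset.sum_le_sum fun r _ => ?_
      have hz_nn : 0 ≤ zInd Hb j := by unfold zInd; split_ifs <;> norm_num
      have hy_nn : 0 ≤ yInd Eb (Pb r).1 j := by unfold yInd; split_ifs <;> norm_num
      by_cases h1 : d r = b ∧ (Pb r).2 = j ∧ j ≠ b
      · rw [if_pos h1]
        by_cases h2 : (Pb r).1 = j
        · have hP : Pb r = (j, j) := Prod.ext_iff.mpr ⟨h2, h1.2.1⟩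
          have hjH : j ∈ Hb := by
            rcases (hPb r).1 with ⟨_, hm⟩ | ⟨hne, _⟩
            · rw [hP] at hm; exact hm
            · rw [hP] at hne; exact absurd rfl hne
          have hz1 : zInd Hb j = 1 := by unfold zInd; rw [if_pos hjH]
          rw [if_pos ⟨h1.1, hP⟩, if_neg (by rw [hP]; rintro ⟨_, _, hne⟩; exact hne rfl),
            hz1]
          simp
        · have hEmem : ((Pb r).1, j) ∈ Eb := by
            rcases (hPb r).1 with ⟨heq, _⟩ | ⟨_, hm⟩
            · exact absurd (heq.trans h1.2.1) h2
            · have hpe : ((Pb r).1, j) = Pb r := by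
                rw [← h1.2.1]
              rw [hpe]; exact hm
          have hy1 : yInd Eb (Pb r).1 j = 1 := by unfold yInd; rw [if_pos hEmem]
          rw [if_neg (by rintro ⟨_, hP⟩; exact h2 (by rw [hP])),
            if_pos ⟨h1.1, h1.2.1, h2⟩, hy1]
          simp
      · rw [if_neg h1]
        have := hw r
        refine add_nonneg ?_ ?_ <;> split_ifs <;> first
          | positivity
          | norm_num
    linarith
  -- the generic single-arc summation lemma
  have aux : ∀ (a b : Fin n) (v : ℝ) (f : Fin n × Fin n → ℝ),
      (∀ p, p ≠ (a, b) → f p = 0) → f (a, b) = c a b * v →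
      (∑ p ∈ F, f p) = c a b * v := by
    intro a b v f h0 hv
    by_cases hab : a = b
    · have hz : ∀ p ∈ F, f p = 0 := by
        intro p hp
        refine h0 p ?_
        rintro rfl
        exact (Finset.mem_filter.mp hp).2 hab
      rw [Finset.sum_eq_zero hz, hab, hcd, zero_mul]
    · have hmem : (a, b) ∈ F := by
        rw [hF]
        exact Finset.mem_filter.mpr ⟨Finset.mem_univ _, hab⟩
      rw [Finset.sum_eq_single (a, b) (fun p _ hne => h0 p hne)
        (fun hnm => absurd hmem hnm), hv]
  -- decomposition of the reference routing cost as an arc-flow cost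
  have inner : ∀ r : R,
      (∑ p ∈ F, c p.1 p.2 *
        (γ * (if o r = p.1 ∧ (Pb r).1 = p.2 ∧ p.1 ≠ p.2 then w r else 0) +
         α * (if Pb r = (p.1, p.2) ∧ p.1 ≠ p.2 then w r else 0) +
         θ * (if d r = p.2 ∧ (Pb r).2 = p.1 ∧ p.1 ≠ p.2 then w r else 0))) =
      w r * routeCost c γ α θ (o r) (d r) (Pb r) := by
    intro r
    have step : ∀ p ∈ F, c p.1 p.2 *
        (γ * (if o r = p.1 ∧ (Pb r).1 = p.2 ∧ p.1 ≠ p.2 then w r else 0) +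
         α * (if Pb r = (p.1, p.2) ∧ p.1 ≠ p.2 then w r else 0) +
         θ * (if d r = p.2 ∧ (Pb r).2 = p.1 ∧ p.1 ≠ p.2 then w r else 0)) =
        ((if o r = p.1 ∧ (Pb r).1 = p.2 ∧ p.1 ≠ p.2 then c p.1 p.2 * (γ * w r) else 0) +
         (if Pb r = (p.1, p.2) ∧ p.1 ≠ p.2 then c p.1 p.2 * (α * w r) else 0) +
         (if d r = p.2 ∧ (Pb r).2 = p.1 ∧ p.1 ≠ p.2 then c p.1 p.2 * (θ * w r) else 0)) := by
      intro p _
      split_ifs <;> ring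
    rw [Finset.sum_congr rfl step, Finset.sum_add_distrib, Finset.sum_add_distrib]
    have e1 : (∑ p ∈ F, if o r = p.1 ∧ (Pb r).1 = p.2 ∧ p.1 ≠ p.2 then
        c p.1 p.2 * (γ * w r) else 0) = c (o r) ((Pb r).1) * (γ * w r) := by
      refine aux (o r) ((Pb r).1) (γ * w r) _ ?_ ?_
      · intro p hne
        rw [if_neg]
        rintro ⟨h1, h2, _⟩
        exact hne (Prod.ext_iff.mpr ⟨h1.symm, h2.symm⟩)
      · by_cases hne : o r = (Pb r).1
        · rw [if_neg (by rintro ⟨_, _, h⟩; exact h hne), ← hne, hcd, zero_mul]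
        · rw [if_pos ⟨rfl, rfl, hne⟩]
    have e2 : (∑ p ∈ F, if Pb r = (p.1, p.2) ∧ p.1 ≠ p.2 then
        c p.1 p.2 * (α * w r) else 0) = c ((Pb r).1) ((Pb r).2) * (α * w r) := by
      refine aux ((Pb r).1) ((Pb r).2) (α * w r) _ ?_ ?_
      · intro p hne
        rw [if_neg]
        rintro ⟨h1, _⟩
        refine hne (Prod.ext_iff.mpr ⟨?_, ?_⟩)
        · exact (Prod.ext_iff.mp h1).1.symm
        · exact (Prod.ext_iff.mp h1).2.symm
      · by_cases hne : (Pb r).1 = (Pb r).2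
        · rw [if_neg (by rintro ⟨_, h⟩; exact h hne), ← hne, hcd, zero_mul]
        · rw [if_pos ⟨Prod.mk.eta.symm, hne⟩]
    have e3 : (∑ p ∈ F, if d r = p.2 ∧ (Pb r).2 = p.1 ∧ p.1 ≠ p.2 then
        c p.1 p.2 * (θ * w r) else 0) = c ((Pb r).2) (d r) * (θ * w r) := by
      refine aux ((Pb r).2) (d r) (θ * w r) _ ?_ ?_
      · intro p hne
        rw [if_neg]
        rintro ⟨h1, h2, _⟩
        exact hne (Prod.ext_iff.mpr ⟨h2.symm, h1.symm⟩)
      · by_cases hne : (Pb r).2 = d r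
        · rw [if_neg (by rintro ⟨_, _, h⟩; exact h hne), ← hne, hcd, zero_mul]
        · rw [if_pos ⟨rfl, rfl, hne⟩]
    rw [e1, e2, e3]
    unfold routeCost
    ring
  have step1 : ∀ p : Fin n × Fin n,
      c p.1 p.2 * (γ * h1Flow w o Pb p.1 p.2 + α * tFlow w Pb p.1 p.2 +
        θ * h2Flow w d Pb p.1 p.2) =
      ∑ r, c p.1 p.2 *
        (γ * (if o r = p.1 ∧ (Pb r).1 = p.2 ∧ p.1 ≠ p.2 then w r else 0) +
         α * (if Pb r = (p.1, p.2) ∧ p.1 ≠ p.2 then w r else 0) +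
         θ * (if d r = p.2 ∧ (Pb r).2 = p.1 ∧ p.1 ≠ p.2 then w r else 0)) := by
    intro p
    unfold h1Flow tFlow h2Flow
    simp only [mul_add, Finset.mul_sum, Finset.sum_add_distrib]
  have hdecomp : (∑ r, w r * routeCost c γ α θ (o r) (d r) (Pb r)) =
      ∑ p ∈ F, c p.1 p.2 * (γ * h1Flow w o Pb p.1 p.2 + α * tFlow w Pb p.1 p.2 +
        θ * h2Flow w d Pb p.1 p.2) := by
    rw [Finset.sum_congr rfl fun p _ => step1 p, Finset.sum_comm]
    exact (Finset.sum_congr rfl fun r _ => inner r).symm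
  refine ⟨fun i j hij => ⟨key_t i j (hEb _ hij).1, key_t j i (hEb _ hij).1.symm⟩,
    key_h1, key_h2, ?_⟩
  rw [hdecomp]
  refine Finset.sum_le_sum fun p hp => ?_
  have hne : p.1 ≠ p.2 := (Finset.mem_filter.mp hp).2
  have hγ0 : 0 ≤ γ := le_of_lt (lt_of_le_of_lt hα0 hγ)
  have hθ0 : 0 ≤ θ := le_of_lt (lt_of_le_of_lt hα0 hθ)
  have h1 := key_h1 p.1 p.2 hne
  have h2 := key_t p.1 p.2 hne
  have h3 := key_h2 p.1 p.2 hne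
  have hcp := hc p.1 p.2
  nlinarith [mul_le_mul_of_nonneg_left h1 hγ0, mul_le_mul_of_nonneg_left h2 hα0,
    mul_le_mul_of_nonneg_left h3 hθ0]
end
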